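/- Let V = (d, Q, T) be an affine ℤ-VASS in which every transition t ∈ T satisfies either A(t) = I, or A(t) = 𝟙 and b(t) = 0, where 𝟙 denotes the d×d matrix all of whose entries equal 1. Let T_I = {t ∈ T : A(t) = I} and T_𝟙 = {t ∈ T : A(t) = 𝟙, b(t) = 0}. Then for all configurations p(u) and q(v): p(u) →* q(v) if and only if (1) p(u) can reach q(v) using only transitions from T_I, or (2) there exist r, r' ∈ Q, t ∈ T_𝟙 and w ∈ ℤ^d such that p(u) →* r'(w), r'(w) →_t r(𝟙·w), and r(𝟙·w) can reach q(v) using only transitions from T_I. -/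
import Mathlib



/-- An affine ℤ-VASS of dimension `d` with control-states `Q` and transitions `T`:
each transition `t` has a source state, a target state, a matrix `A(t)` and a vector `b(t)`. -/
structure AffineZVASS (d : ℕ) (Q : Type) (T : Type) where
  src : T → Q
  tgt : T → Q
  mat : T → Matrix (Fin d) (Fin d) ℤ
  vec : T → (Fin d → ℤ)

namespace AffineZVASS

variable {d : ℕ} {Q T : Type}

/-- One step along transition `t`: from `src t (u)` to `tgt t (A(t)·u + b(t))`. -/
def Step (V : AffineZVASS d Q T) (t : T) (c c' : Q × (Fin d → ℤ)) : Prop :=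
  c.1 = V.src t ∧ c' = (V.tgt t, (V.mat t).mulVec c.2 + V.vec t)

/-- `V.StepWord w c c'` : `c →_w c'`. -/
def StepWord (V : AffineZVASS d Q T) : List T → (Q × (Fin d → ℤ)) → (Q × (Fin d → ℤ)) → Prop
  | [], c, c' => c = c'
  | t :: w, c, c' => ∃ c'', V.Step t c c'' ∧ V.StepWord w c'' c'

/-- Reachability: `c →* c'`. -/
def Reach (V : AffineZVASS d Q T) (c c' : Q × (Fin d → ℤ)) : Prop :=
  ∃ w : List T, V.StepWord w c c'

/-- `w` is a path from `p` to `q` in the underlying graph of `V`. -/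
def IsPath (V : AffineZVASS d Q T) : List T → Q → Q → Prop
  | [], p, q => p = q
  | t :: w, p, q => V.src t = p ∧ V.IsPath w (V.tgt t) q

/-- The effect `w(u)` of a word of transitions on a counter vector:
`ε(u) = u` and `(wt)(u) = A(t)·(w(u)) + b(t)`. -/
def eff (V : AffineZVASS d Q T) : List T → (Fin d → ℤ) → (Fin d → ℤ)
  | [], u => u
  | t :: w, u => V.eff w ((V.mat t).mulVec u + V.vec t)

/-- The matrix `M(w)`: `M(ε) = I` and `M(wt) = A(t)·M(w)`. -/
def Mword (V : AffineZVASS d Q T) : List T → Matrix (Fin d) (Fin d) ℤ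
  | [] => 1
  | t :: w => V.Mword w * V.mat t

end AffineZVASS

namespace AffineZVASS

variable {d : ℕ} {Q T : Type}

/-- The `d×d` all-ones matrix `𝟙`. -/
def allOnes (d : ℕ) : Matrix (Fin d) (Fin d) ℤ :=
  Matrix.of fun _ _ => 1

/-- Reachability using only transitions from a subset `S` of the transitions. -/
def ReachVia (V : AffineZVASS d Q T) (S : Set T) (c c' : Q × (Fin d → ℤ)) : Prop :=
  ∃ w : List T, (∀ t ∈ w, t ∈ S) ∧ V.StepWord w c c'

end AffineZVASS

namespace AffineZVASS

variable {d : ℕ} {Q T : Type}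

lemma stepWord_append (V : AffineZVASS d Q T) (w1 w2 : List T) (c c' : Q × (Fin d → ℤ)) :
    V.StepWord (w1 ++ w2) c c' ↔ ∃ c'', V.StepWord w1 c c'' ∧ V.StepWord w2 c'' c' := by
  induction w1 generalizing c with
  | nil =>
    simp [StepWord]
  | cons t w1 ih =>
    constructor
    · rintro ⟨a, ha, hrest⟩
      rcases (ih a).1 hrest with ⟨b, hb1, hb2⟩
      exact ⟨b, ⟨a, ha, hb1⟩, hb2⟩
    · rintro ⟨b, ⟨a, ha, hb⟩, hb'⟩
      exact ⟨a, ha, (ih a).2 ⟨b, hb, hb'⟩⟩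

lemma list_split (S : Set T) (w : List T) :
    (∀ t ∈ w, t ∈ S) ∨
      ∃ w1 t w2, w = w1 ++ t :: w2 ∧ t ∉ S ∧ ∀ s ∈ w2, s ∈ S := by
  induction w with
  | nil => exact Or.inl (by simp)
  | cons t w ih =>
    rcases ih with h | ⟨w1, t', w2, rfl, ht', hw2⟩
    · rcases Classical.em (t ∈ S) with hts | hts
      · exact Or.inl (by simpa [hts] using h)
      · exact Or.inr ⟨[], t, w, by simp, hts, h⟩
    · exact Or.inr ⟨t :: w1, t', w2, by simp, ht', hw2⟩

lemma reach_trans (V : AffineZVASS d Q T) {a b c : Q × (Fin d → ℤ)} :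
    V.Reach a b → V.Reach b c → V.Reach a c := by
  rintro ⟨w1, h1⟩ ⟨w2, h2⟩
  exact ⟨w1 ++ w2, (V.stepWord_append w1 w2 a c).2 ⟨b, h1, h2⟩⟩

end AffineZVASS

open AffineZVASS in
/-- Characterization of reachability in an affine ℤ-VASS in which every transition
either has matrix `I`, or has matrix `𝟙` and vector `0`: `p(u) →* q(v)` iff either
`q(v)` is reachable from `p(u)` using only `T_I`-transitions, or the run can be split
as `p(u) →* r'(w) →_t r(𝟙·w) →_{T_I^*} q(v)` with `t ∈ T_𝟙`. -/
theorem reach_characterization_allOnes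
    (d : ℕ) (Q T : Type) [Fintype Q] [Fintype T] (V : AffineZVASS d Q T)
    (hT : ∀ t : T, V.mat t = 1 ∨ (V.mat t = allOnes d ∧ V.vec t = 0))
    (p q : Q) (u v : Fin d → ℤ) :
    V.Reach (p, u) (q, v) ↔
      (V.ReachVia {t | V.mat t = 1} (p, u) (q, v) ∨
        ∃ (r r' : Q) (t : T) (w : Fin d → ℤ),
          V.mat t = allOnes d ∧ V.vec t = 0 ∧ V.src t = r' ∧ V.tgt t = r ∧
          V.Reach (p, u) (r', w) ∧
          V.ReachVia {t | V.mat t = 1} (r, (allOnes d).mulVec w) (q, v)) := by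
  constructor
  · rintro ⟨w, hw⟩
    rcases AffineZVASS.list_split {t | V.mat t = 1} w with h | ⟨w1, t, w2, rfl, ht, hw2⟩
    · exact Or.inl ⟨w, h, hw⟩
    · rcases (V.stepWord_append w1 (t :: w2) _ _).1 hw with ⟨c1, h1, c2, hstep, h2⟩
      rcases hT t with h | ⟨hmat, hvec⟩
      · exact absurd h ht
      refine Or.inr ⟨V.tgt t, V.src t, t, c1.2, hmat, hvec, rfl, rfl, ⟨w1, ?_⟩, w2, hw2, ?_⟩
      · obtain ⟨hc1, -⟩ := hstep
        have : c1 = (V.src t, c1.2) := Prod.ext hc1 rfl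
        rwa [← this]
      · obtain ⟨-, hc2⟩ := hstep
        rw [hmat, hvec] at hc2
        simpa [hc2] using h2
  · rintro (⟨w, -, hw⟩ | ⟨r, r', t, w, hmat, hvec, hsrc, htgt, hreach, w2, -, hw2⟩)
    · exact ⟨w, hw⟩
    · refine V.reach_trans hreach (V.reach_trans ⟨[t], ?_⟩ ⟨w2, hw2⟩)
      exact ⟨(r, (allOnes d).mulVec w), ⟨hsrc.symm, by simp [hmat, hvec, htgt]⟩, rfl⟩
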